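/- For m > 0, the function A ↦ φ_m(A) − (2/3) A φ_m′(A) is strictly increasing on the interval (16π m², ∞). -/

import Mathlib

/-- Area of the coordinate sphere of radius `r` in the Schwarzschild manifold of
mass `m`, in isotropic coordinates: `A_m(r) = 4π r² (1 + m/(2r))⁴`. -/
noncomputable def schwA (m r : ℝ) : ℝ := 4 * Real.pi * r ^ 2 * (1 + m / (2 * r)) ^ 4

/-- Volume enclosed between the horizon `r = m/2` and the coordinate sphere of radius `r`
in the Schwarzschild manifold of mass `m`:
`V_m(r) = ∫_{m/2}^r 4π ρ² (1 + m/(2ρ))⁶ dρ`. -/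
noncomputable def schwV (m r : ℝ) : ℝ :=
  ∫ ρ in (m / 2)..r, 4 * Real.pi * ρ ^ 2 * (1 + m / (2 * ρ)) ^ 6

/-- The Schwarzschild isoperimetric profile of mass `m`: `φ_m = V_m ∘ A_m⁻¹`, where
`A_m⁻¹ : [16πm², ∞) → [m/2, ∞)` is the inverse of the (bijective, strictly increasing)
area function `A_m : [m/2, ∞) → [16πm², ∞)`. -/
noncomputable def schwPhi (m A : ℝ) : ℝ :=
  schwV m (Function.invFunOn (schwA m) (Set.Ici (m / 2)) A)

/-!
Put `r = A_m⁻¹(A) > m/2`. By the inverse function theorem and the fundamental theorem of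
calculus, `φ_m'(A) = V_m'(r) / A_m'(r) = (2r + m)³ / (8r(2r - m))`, so
`φ_m(A) - (2/3) A φ_m'(A)` is a function of `r` alone, whose derivative in `r` is
`π m (2r + m)⁶ / (12 r³ (2r - m)²) > 0`. As `A ↦ r` is strictly increasing, so is the composite.
-/

open Real Set Filter Topology Function

theorem StrictMonoOn.strictMonoOn_of_rightInvOn {α β : Type*} [LinearOrder α] [Preorder β]
    {f : α → β} {g : β → α} {s : Set α} {t : Set β} (hf : StrictMonoOn f s) (hg : MapsTo g t s)
    (hfg : RightInvOn g f t) : StrictMonoOn g t := by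
  intro x hx y hy hxy
  by_contra! h
  have hle := hf.monotoneOn (hg hy) (hg hx) h
  rw [hfg hx, hfg hy] at hle
  exact hle.not_gt hxy

theorem ContinuousOn.surjOn_Ioi_of_tendsto {α δ : Type*} [ConditionallyCompleteLinearOrder α]
    [TopologicalSpace α] [OrderTopology α] [DenselyOrdered α] [LinearOrder δ] [TopologicalSpace δ]
    [OrderClosedTopology δ] {f : α → δ} {a : α} (hf : ContinuousOn f (Ici a))
    (htop : Tendsto f atTop atTop) : SurjOn f (Ioi a) (Ioi (f a)) := by
  intro y hy
  obtain ⟨x, hx, rfl⟩ := intermediate_value_Ici hf htop (le_of_lt hy)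
  exact ⟨x, lt_of_le_of_ne hx (by rintro rfl; exact lt_irrefl _ hy), rfl⟩

section Schwarzschild

variable {m r : ℝ}

lemma hasDerivAt_schwA (m : ℝ) (hr : r ≠ 0) :
    HasDerivAt (schwA m) (8 * π * (1 + m / (2 * r)) ^ 3 * (r - m / 2)) r := by
  have hu : HasDerivAt (fun x => 1 + m / (2 * x)) (-(m / (2 * r ^ 2))) r :=
    (((hasDerivAt_const r m).div ((hasDerivAt_id r).const_mul 2)
      (mul_ne_zero two_ne_zero hr)).const_add 1).congr_deriv (by simp only [id]; field_simp; ring)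
  refine (((hasDerivAt_pow 2 r).const_mul (4 * π)).fun_mul (hu.fun_pow 4)).congr_deriv ?_
  norm_num only
  field_simp
  ring

lemma schwA_half (m : ℝ) : schwA m (m / 2) = 16 * π * m ^ 2 := by
  rcases eq_or_ne m 0 with rfl | hm
  · simp [schwA]
  · unfold schwA
    field_simp
    ring

lemma continuousOn_schwA (hm : 0 < m) : ContinuousOn (schwA m) (Ici (m / 2)) := fun r hr =>
  (hasDerivAt_schwA m (by linarith [mem_Ici.1 hr] : r ≠ 0)).continuousAt.continuousWithinAt

lemma strictMonoOn_schwA (hm : 0 < m) : StrictMonoOn (schwA m) (Ici (m / 2)) := by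
  refine strictMonoOn_of_deriv_pos (convex_Ici _) (continuousOn_schwA hm) fun r hr => ?_
  rw [interior_Ici, mem_Ioi] at hr
  have hr0 : 0 < r := by linarith
  rw [(hasDerivAt_schwA m hr0.ne').deriv]
  have : 0 < r - m / 2 := by linarith
  positivity

lemma tendsto_schwA_atTop (hm : 0 ≤ m) : Tendsto (schwA m) atTop atTop := by
  refine tendsto_atTop_mono' _ ?_ ((tendsto_pow_atTop two_ne_zero).const_mul_atTop
    (by positivity : (0 : ℝ) < 4 * π))
  filter_upwards [eventually_gt_atTop 0] with r hr
  exact le_mul_of_one_le_right (by positivity)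
    (one_le_pow₀ (le_add_of_nonneg_right (by positivity)))

noncomputable def schwAInv (m : ℝ) : ℝ → ℝ := invFunOn (schwA m) (Ici (m / 2))

lemma mapsTo_schwA (hm : 0 < m) : MapsTo (schwA m) (Ioi (m / 2)) (Ioi (16 * π * m ^ 2)) :=
  fun _ hr => schwA_half m ▸ strictMonoOn_schwA hm self_mem_Ici (Ioi_subset_Ici_self hr) hr

lemma surjOn_schwA (hm : 0 < m) : SurjOn (schwA m) (Ioi (m / 2)) (Ioi (16 * π * m ^ 2)) :=
  schwA_half m ▸ ContinuousOn.surjOn_Ioi_of_tendsto (continuousOn_schwA hm)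
    (tendsto_schwA_atTop hm.le)

lemma bijOn_schwA (hm : 0 < m) : BijOn (schwA m) (Ioi (m / 2)) (Ioi (16 * π * m ^ 2)) :=
  ⟨mapsTo_schwA hm, (strictMonoOn_schwA hm).injOn.mono Ioi_subset_Ici_self, surjOn_schwA hm⟩

lemma invOn_schwAInv (hm : 0 < m) :
    InvOn (schwAInv m) (schwA m) (Ioi (m / 2)) (Ioi (16 * π * m ^ 2)) := by
  refine ⟨fun r hr => (strictMonoOn_schwA hm).injOn.leftInvOn_invFunOn (Ioi_subset_Ici_self hr),
    fun A hA => ?_⟩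
  obtain ⟨r, hr, rfl⟩ := surjOn_schwA hm hA
  exact invFunOn_eq ⟨r, Ioi_subset_Ici_self hr, rfl⟩

lemma bijOn_schwAInv (hm : 0 < m) : BijOn (schwAInv m) (Ioi (16 * π * m ^ 2)) (Ioi (m / 2)) :=
  (bijOn_schwA hm).symm (invOn_schwAInv hm).symm

lemma strictMonoOn_schwAInv (hm : 0 < m) : StrictMonoOn (schwAInv m) (Ioi (16 * π * m ^ 2)) :=
  (strictMonoOn_schwA hm).strictMonoOn_of_rightInvOn
    ((bijOn_schwAInv hm).mapsTo.mono_right Ioi_subset_Ici_self) (invOn_schwAInv hm).2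

lemma continuousAt_schwAInv (hm : 0 < m) {A : ℝ} (hA : 16 * π * m ^ 2 < A) :
    ContinuousAt (schwAInv m) A := by
  refine (strictMonoOn_schwAInv hm).continuousAt_of_image_mem_nhds (Ioi_mem_nhds hA) ?_
  rw [(bijOn_schwAInv hm).image_eq]
  exact Ioi_mem_nhds ((bijOn_schwAInv hm).mapsTo hA)

lemma hasDerivAt_schwAInv (hm : 0 < m) {A : ℝ} (hA : 16 * π * m ^ 2 < A) :
    HasDerivAt (schwAInv m)
      (8 * π * (1 + m / (2 * schwAInv m A)) ^ 3 * (schwAInv m A - m / 2))⁻¹ A := by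
  have hr : m / 2 < schwAInv m A := (bijOn_schwAInv hm).mapsTo hA
  have hr0 : 0 < schwAInv m A := by linarith
  refine .of_local_left_inverse (continuousAt_schwAInv hm hA) (hasDerivAt_schwA m hr0.ne')
    ?_ (eventually_gt_nhds hA |>.mono fun B hB => (invOn_schwAInv hm).2 hB)
  have : 0 < schwAInv m A - m / 2 := by linarith
  positivity

lemma hasDerivAt_schwV (hm : 0 < m) (hr : 0 < r) :
    HasDerivAt (schwV m) (4 * π * r ^ 2 * (1 + m / (2 * r)) ^ 6) r := by
  have hcont : ContinuousOn (fun ρ : ℝ => 4 * π * ρ ^ 2 * (1 + m / (2 * ρ)) ^ 6) (Ioi 0) :=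
    fun ρ hρ => by
      have : 2 * ρ ≠ 0 := by simp [ne_of_gt (mem_Ioi.1 hρ)]
      fun_prop (disch := assumption)
  have hsub : uIcc (m / 2) r ⊆ Ioi 0 := fun x hx => (lt_min (half_pos hm) hr).trans_le hx.1
  exact intervalIntegral.integral_hasDerivAt_right ((hcont.mono hsub).intervalIntegrable)
    (hcont.stronglyMeasurableAtFilter isOpen_Ioi r hr) (hcont.continuousAt (Ioi_mem_nhds hr))

-- `φ_m'(A_m(r)) = V_m'(r) / A_m'(r)`, simplified.
noncomputable def schwPhiDeriv (m r : ℝ) : ℝ := (2 * r + m) ^ 3 / (8 * r * (2 * r - m))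

lemma hasDerivAt_schwPhi (hm : 0 < m) {A : ℝ} (hA : 16 * π * m ^ 2 < A) :
    HasDerivAt (schwPhi m) (schwPhiDeriv m (schwAInv m A)) A := by
  have hr : m / 2 < schwAInv m A := (bijOn_schwAInv hm).mapsTo hA
  refine ((hasDerivAt_schwV hm (by linarith)).comp A (hasDerivAt_schwAInv hm hA)).congr_deriv ?_
  generalize schwAInv m A = r at hr ⊢
  have : r ≠ 0 := by linarith
  have : 2 * r - m ≠ 0 := by linarith
  unfold schwPhiDeriv
  field_simp
  ring

lemma hasDerivAt_schwPhiDeriv (m : ℝ) (hr : r ≠ 0) (hrm : 2 * r - m ≠ 0) :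
    HasDerivAt (schwPhiDeriv m)
      ((2 * r + m) ^ 2 * (4 * r ^ 2 - 8 * r * m + m ^ 2) / (8 * r ^ 2 * (2 * r - m) ^ 2)) r := by
  have hnum : HasDerivAt (fun x => (2 * x + m) ^ 3) (3 * (2 * r + m) ^ 2 * 2) r := by
    simpa using (((hasDerivAt_id r).const_mul 2).add_const m).fun_pow 3
  have hden : HasDerivAt (fun x => 8 * x * (2 * x - m)) (8 * (2 * r - m) + 8 * r * 2) r := by
    simpa using
      ((hasDerivAt_id r).const_mul 8).fun_mul (((hasDerivAt_id r).const_mul 2).sub_const m)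
  refine (hnum.div hden (by simp [hr, hrm])).congr_deriv ?_
  field_simp
  ring

noncomputable def schwPhiAux (m r : ℝ) : ℝ := schwV m r - 2 / 3 * schwA m r * schwPhiDeriv m r

lemma hasDerivAt_schwPhiAux (hm : 0 < m) (hr : m / 2 < r) :
    HasDerivAt (schwPhiAux m) (π * m * (2 * r + m) ^ 6 / (12 * r ^ 3 * (2 * r - m) ^ 2)) r := by
  have hr0 : r ≠ 0 := by linarith
  have hrm : 2 * r - m ≠ 0 := by linarith
  refine ((hasDerivAt_schwV hm (by linarith)).sub
    (((hasDerivAt_schwA m hr0).const_mul (2 / 3)).fun_mul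
      (hasDerivAt_schwPhiDeriv m hr0 hrm))).congr_deriv ?_
  have : r * 2 - m ≠ 0 := by linarith
  unfold schwA schwPhiDeriv
  field_simp
  ring

lemma strictMonoOn_schwPhiAux (hm : 0 < m) : StrictMonoOn (schwPhiAux m) (Ioi (m / 2)) := by
  refine strictMonoOn_of_deriv_pos (convex_Ioi _)
    (fun r hr => (hasDerivAt_schwPhiAux hm hr).continuousAt.continuousWithinAt) fun r hr => ?_
  rw [interior_Ioi, mem_Ioi] at hr
  rw [(hasDerivAt_schwPhiAux hm hr).deriv]
  have : 0 < r := by linarith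
  have : 0 < 2 * r - m := by linarith
  positivity

lemma schwPhi_sub_eq_schwPhiAux (hm : 0 < m) {A : ℝ} (hA : 16 * π * m ^ 2 < A) :
    schwPhi m A - 2 / 3 * A * deriv (schwPhi m) A = schwPhiAux m (schwAInv m A) := by
  rw [(hasDerivAt_schwPhi hm hA).deriv, schwPhiAux, (invOn_schwAInv hm).2 hA]
  rfl

end Schwarzschild

/-- For `m > 0`, `A ↦ φ_m(A) − (2/3) A φ_m′(A)` is strictly increasing on
`(16πm², ∞)`. -/
theorem schwPhi_aux_strictMono (m : ℝ) (hm : 0 < m) :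
    StrictMonoOn (fun A : ℝ => schwPhi m A - 2 / 3 * A * deriv (schwPhi m) A)
      (Set.Ioi (16 * Real.pi * m ^ 2)) :=
  ((strictMonoOn_schwPhiAux hm).comp (strictMonoOn_schwAInv hm) (bijOn_schwAInv hm).mapsTo).congr
    fun _ hA => (schwPhi_sub_eq_schwPhiAux hm hA).symm
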